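/- Pseudo-dual frames have the same excess: if (f_n) and (g_n) are frames in H with analysis operators U and V such that V*U is invertible in B(H), then dim(Ker U*) = dim(Ker V*). -/

import Mathlib

open scoped InnerProductSpace

noncomputable section

abbrev ell2 : Type := lp (fun _ : ℕ => ℂ) 2

def IsFrame {H : Type*} [NormedAddCommGroup H] [InnerProductSpace ℂ H]
    (f : ℕ → H) : Prop :=
  ∃ A B : ℝ, 0 < A ∧ 0 < B ∧ ∀ x : H,
    A * ‖x‖ ^ 2 ≤ ∑' n, ‖⟪x, f n⟫_ℂ‖ ^ 2 ∧ ∑' n, ‖⟪x, f n⟫_ℂ‖ ^ 2 ≤ B * ‖x‖ ^ 2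

def IsAnalysisOp {H : Type*} [NormedAddCommGroup H] [InnerProductSpace ℂ H]
    (f : ℕ → H) (U : H →L[ℂ] ell2) : Prop :=
  ∀ (x : H) (n : ℕ), (U x : ∀ _ : ℕ, ℂ) n = ⟪x, f n⟫_ℂ

/-!
Since `V†U` is invertible, every `z ∈ ℓ²` splits uniquely as `U x + (z - U x)` with
`V†U x = V† z`, so `ker V†` is an algebraic complement of `ran U`. The continuous left inverse
`(V†U)⁻¹ V†` of `U` makes `ran U` closed, so `(ran U)ᗮ = ker U†` is another one. Two complements
of the same subspace are both isomorphic to `ℓ² ⧸ ran U`.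
-/

namespace LinearMap

variable {R M N : Type*} [Ring R] [AddCommGroup M] [Module R M] [AddCommGroup N] [Module R N]

theorem isCompl_range_ker_of_bijective_comp {U : M →ₗ[R] N} {W : N →ₗ[R] M}
    (h : Function.Bijective (W ∘ₗ U)) : IsCompl (range U) (ker W) := by
  refine ⟨?_, ?_⟩
  · rw [Submodule.disjoint_def]
    rintro _ ⟨x, rfl⟩ hx
    rw [h.1 (hx.trans (map_zero (W ∘ₗ U)).symm), map_zero]
  · rw [codisjoint_iff, eq_top_iff]
    rintro z -
    obtain ⟨x, hx⟩ := h.2 (W z)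
    exact Submodule.mem_sup.mpr ⟨U x, mem_range_self U x, z - U x,
      by simp [mem_ker, ← hx], add_sub_cancel _ _⟩

end LinearMap

theorem Submodule.rank_eq_of_isCompl {R M : Type*} [Ring R] [AddCommGroup M] [Module R M]
    {p q r : Submodule R M} (hq : IsCompl p q) (hr : IsCompl p r) :
    Module.rank R q = Module.rank R r :=
  ((quotientEquivOfIsCompl p q hq).symm.trans (quotientEquivOfIsCompl p r hr)).rank_eq

open ContinuousLinearMap in
theorem ContinuousLinearMap.rank_ker_adjoint_eq_of_isUnit_adjoint_comp
    {𝕜 E F : Type*} [RCLike 𝕜] [NormedAddCommGroup E] [InnerProductSpace 𝕜 E] [CompleteSpace E]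
    [NormedAddCommGroup F] [InnerProductSpace 𝕜 F] [CompleteSpace F]
    {U V : E →L[𝕜] F} (h : IsUnit (adjoint V ∘L U)) :
    Module.rank 𝕜 (adjoint U).ker = Module.rank 𝕜 (adjoint V).ker := by
  obtain ⟨u, hu⟩ := h
  obtain ⟨e, he⟩ : (adjoint V ∘L U).IsInvertible :=
    ⟨ContinuousLinearEquiv.unitsEquiv 𝕜 E u, by ext; simp [← hu]⟩
  have : CompleteSpace U.range :=
    (HasLeftInverse.of_comp (.of_isInvertible ⟨e, he⟩)).isClosed_range.completeSpace_coe
  rw [← orthogonal_range]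
  refine Submodule.rank_eq_of_isCompl (Submodule.isCompl_orthogonal _)
    (LinearMap.isCompl_range_ker_of_bijective_comp ?_)
  have := e.bijective
  rwa [← ContinuousLinearEquiv.coe_coe, he] at this

theorem pseudo_dual_frames_same_excess_general
    {H : Type*} [NormedAddCommGroup H] [InnerProductSpace ℂ H] [CompleteSpace H]
    (U V : H →L[ℂ] ell2)
    (hpd : IsUnit ((ContinuousLinearMap.adjoint V) ∘L U)) :
    Module.rank ℂ (LinearMap.ker (ContinuousLinearMap.adjoint U : ell2 →ₗ[ℂ] H)) =
      Module.rank ℂ (LinearMap.ker (ContinuousLinearMap.adjoint V : ell2 →ₗ[ℂ] H)) :=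
  ContinuousLinearMap.rank_ker_adjoint_eq_of_isUnit_adjoint_comp hpd

/-- Pseudo-dual frames have the same excess. -/
theorem pseudo_dual_frames_same_excess
    {H : Type*} [NormedAddCommGroup H] [InnerProductSpace ℂ H] [CompleteSpace H]
    (f g : ℕ → H) (hf : IsFrame f) (hg : IsFrame g)
    (U V : H →L[ℂ] ell2) (hU : IsAnalysisOp f U) (hV : IsAnalysisOp g V)
    (hpd : IsUnit ((ContinuousLinearMap.adjoint V) ∘L U)) :
    Module.rank ℂ (LinearMap.ker (ContinuousLinearMap.adjoint U : ell2 →ₗ[ℂ] H)) =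
      Module.rank ℂ (LinearMap.ker (ContinuousLinearMap.adjoint V : ell2 →ₗ[ℂ] H)) :=
  pseudo_dual_frames_same_excess_general U V hpd
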